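/- For every integer k ≥ 1, f(k) ≤ k − √k + 2 (as an inequality of real numbers, where f(k) is coerced to ℝ). -/

import Mathlib

/-- Fuel-based helper for the recursive function `f`. For `k ≤ fuel`, `faux fuel k`
computes the value of `f k`. -/
def faux : ℕ → ℕ → ℕ
  | 0, _ => 1
  | fuel + 1, k =>
    if k ≤ 2 then 1
    else if k ≤ 4 then 2
    else
      min (faux fuel (k - 1) + 1)
        (((List.range k).filter (fun k1 => 3 ≤ k1 ∧ k1 ∣ k)).foldr
          (fun k1 acc => min (k - k1 - k / k1 + 1 + max (faux fuel k1) (k / k1)) acc)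
          (faux fuel (k - 1) + 1))

/-- `f 1 = 1`, `f 2 = 1`, `f 3 = 2`, `f 4 = 2`, and for `k > 4`,
`f k = min (f (k-1) + 1)
          (min over factorizations k = k₁·k₂ with 3 ≤ k₁ < k, 2 ≤ k₂ of
             k₁·k₂ - k₁ - k₂ + 1 + max (f k₁) k₂)`,
where the inner minimum is omitted when no such factorization exists.
(Note: for a divisor `k₁` of `k` with `3 ≤ k₁ < k`, the cofactor `k₂ = k / k₁`
automatically satisfies `k₂ ≥ 2`.) -/
def f (k : ℕ) : ℕ := faux k k

/-!
Only two branches of the recursion are needed: `f (k + 1) ≤ f k + 1`, and the factorization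
`s² = s · s`, which gives `f (s²) ≤ s² - s + 1` once one knows `f s ≤ s`. With `s = ⌊√k⌋`,
walking from `s²` up to `k` then yields `f k ≤ k - s + 1 ≤ k - √k + 2`.
The bound `faux n k ≤ k` holds for every amount of fuel, so the fuel never has to be
matched to its argument.
-/

theorem List.foldr_min_le_of_mem {α β : Type*} [LinearOrder β] (F : α → β) (b : β)
    {l : List α} {x : α} (hx : x ∈ l) :
    l.foldr (fun y acc => min (F y) acc) b ≤ F x := by
  induction l with
  | nil => cases hx
  | cons y ys ih =>
    rcases List.mem_cons.mp hx with rfl | hx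
    · exact min_le_left _ _
    · exact (min_le_right _ _).trans (ih hx)

theorem faux_le_self : ∀ (n : ℕ) {k : ℕ}, 1 ≤ k → faux n k ≤ k
  | 0, _, hk => hk
  | n + 1, k, hk => by
    rw [faux]
    split_ifs with h2 h4
    · exact hk
    · omega
    · have := faux_le_self n (k := k - 1) (by omega)
      exact (min_le_left _ _).trans (by omega)

theorem f_succ_le (k : ℕ) : f (k + 1) ≤ f k + 1 := by
  by_cases hk : k + 1 ≤ 4
  · have : k ≤ 3 := by omega
    interval_cases k <;> decide
  · rw [f, faux, if_neg (by omega), if_neg hk]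
    exact min_le_left _ _

theorem f_le_of_le {a b : ℕ} (h : a ≤ b) : f b ≤ f a + (b - a) := by
  induction b, h using Nat.le_induction with
  | base => simp
  | succ b hab ih => have := f_succ_le b; omega

theorem f_le_of_dvd {k d : ℕ} (hk : 4 < k) (hd : 3 ≤ d) (hdk : d < k) (hdvd : d ∣ k) :
    f k ≤ k - d - k / d + 1 + max d (k / d) := by
  obtain ⟨m, rfl⟩ : ∃ m, k = m + 1 := ⟨k - 1, by omega⟩
  rw [f, faux, if_neg (by omega), if_neg (by omega)]
  have hmem : d ∈ (List.range (m + 1)).filter (fun k1 => 3 ≤ k1 ∧ k1 ∣ m + 1) := by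
    simp [hdk, hd, hdvd]
  refine (min_le_right _ _).trans ((List.foldr_min_le_of_mem _ _ hmem).trans ?_)
  have := faux_le_self m (k := d) (by omega)
  gcongr

theorem f_mul_self_le {s : ℕ} (hs : 3 ≤ s) : f (s * s) ≤ s * s - s + 1 := by
  have h := f_le_of_dvd (by nlinarith) hs (by nlinarith) (dvd_mul_right s s)
  rw [Nat.mul_div_cancel_left s (by omega), max_self] at h
  have : 2 * s ≤ s * s := by nlinarith
  omega

theorem f_add_sqrt_le {k : ℕ} (hk : 1 ≤ k) : f k + Nat.sqrt k ≤ k + 1 := by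
  by_cases hsmall : k < 9
  · have hs : Nat.sqrt k ≤ 2 := Nat.lt_succ_iff.mp (Nat.sqrt_lt.mpr hsmall)
    rcases Nat.lt_or_ge k 2 with h1 | h2
    · obtain rfl : k = 1 := by omega
      decide
    · have h_walk := f_le_of_le h2
      have hf2 : f 2 = 1 := rfl
      omega
  · have hs : 3 ≤ Nat.sqrt k := Nat.le_sqrt.mpr (by omega)
    have hsq := Nat.sqrt_le k
    have h_sq := f_mul_self_le hs
    have h_walk := f_le_of_le hsq
    have : Nat.sqrt k ≤ Nat.sqrt k * Nat.sqrt k := Nat.le_mul_self _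
    omega

/-- For every integer `k ≥ 1`, `f k ≤ k - √k + 2` as real numbers. This is the
exponent bound underlying the corollary that `k`-SUM can be solved in
`Õ(n^{k - √k + 2})` time and `O(n)` space by a Las Vegas algorithm. -/
theorem stmt_10 (k : ℕ) (hk : 1 ≤ k) :
    (f k : ℝ) ≤ (k : ℝ) - Real.sqrt k + 2 := by
  have hnat : (f k : ℝ) + Nat.sqrt k ≤ k + 1 := by exact_mod_cast f_add_sqrt_le hk
  have hsqrt : Real.sqrt k ≤ Nat.sqrt k + 1 := Real.real_sqrt_le_nat_sqrt_succ
  linarith
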